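/- arXiv:2605.07413 — 4 statements merged into one kernel-verified Lean document; each statement's English description precedes it below -/
import Mathlib

section
/- Let k ≥ 2, 1 ≤ m ≤ k-1, p a pmf on {1,...,k}. Then for every fixed y: p(y) = ((k-1)/(k-m)) · Σ_{L ∈ Q_m : y ∈ L} q1(L) − ((m-1)/(k-m)), where q1(L) := (1/C(k-1, m-1)) Σ_{j ∈ L} p(j) is the conditional law of L given s=1 under the symmetric random-query mechanism. -/
open Finset

lemma count_supersets {α : Type*} [Fintype α] [DecidableEq α] (t : Finset α) (m : ℕ)
    (ht : t.card ≤ m) :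
    (((univ : Finset α).powersetCard m).filter (fun L => t ⊆ L)).card =
      Nat.choose (Fintype.card α - t.card) (m - t.card) := by
  rw [← card_compl t, ← card_powersetCard (m - t.card) tᶜ]
  apply card_bij' (fun L _ => L \ t) (fun A _ => A ∪ t)
  · intro L hL
    simp only [mem_filter, mem_powersetCard_univ] at hL
    simp only [mem_powersetCard]
    constructor
    · intro x hx
      simp only [mem_sdiff] at hx
      simp [hx.2]
    · rw [card_sdiff_of_subset hL.2, hL.1]
  · intro A hA
    simp only [mem_powersetCard] at hA
    have hdisj : Disjoint A t := by
      rw [disjoint_iff_inter_eq_empty]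
      ext x
      simp only [mem_inter, notMem_empty, iff_false, not_and]
      intro hx
      have := hA.1 hx
      simpa using this
    simp only [mem_filter, mem_powersetCard_univ]
    constructor
    · rw [card_union_of_disjoint hdisj, hA.2]
      omega
    · exact subset_union_right
  · intro L hL
    simp only [mem_filter, mem_powersetCard_univ] at hL
    exact sdiff_union_of_subset hL.2
  · intro A hA
    simp only [mem_powersetCard] at hA
    have hdisj : Disjoint A t := by
      rw [disjoint_iff_inter_eq_empty]
      ext x
      simp only [mem_inter, notMem_empty, iff_false, not_and]
      intro hx
      have := hA.1 hx
      simpa using this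
    exact union_sdiff_cancel_right hdisj

theorem pmf_recovery_from_positive_response_law (k m : ℕ) (hk : 2 ≤ k) (hm1 : 1 ≤ m)
    (hm2 : m ≤ k - 1) (p : Fin k → ℝ) (hp : ∀ y, 0 ≤ p y) (hsum : ∑ y, p y = 1)
    (y : Fin k) :
    p y = (((k : ℝ) - 1) / ((k : ℝ) - (m : ℝ))) *
        ∑ L ∈ ((Finset.univ : Finset (Fin k)).powersetCard m).filter (fun L => y ∈ L),
          (1 / (Nat.choose (k - 1) (m - 1) : ℝ)) * ∑ j ∈ L, p j
      - ((m : ℝ) - 1) / ((k : ℝ) - (m : ℝ)) := by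
  have hmk : m < k := by omega
  set F := ((Finset.univ : Finset (Fin k)).powersetCard m).filter (fun L => y ∈ L) with hF
  set c1 := Nat.choose (k - 1) (m - 1) with hc1def
  set n2 : ℕ := if 2 ≤ m then Nat.choose (k - 2) (m - 2) else 0 with hn2def
  -- count of L with y ∈ L
  have hcard1 : F.card = c1 := by
    have : F = ((univ : Finset (Fin k)).powersetCard m).filter
        (fun L => ({y} : Finset (Fin k)) ⊆ L) := by
      rw [hF]; apply filter_congr; intro L _; simp
    rw [this, count_supersets _ m (by simpa using hm1)]
    simp [hc1def, Fintype.card_fin]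
  -- count of L with y ∈ L and j ∈ L, for j ≠ y
  have hcard2 : ∀ j : Fin k, j ≠ y → (F.filter (fun L => j ∈ L)).card = n2 := by
    intro j hj
    have hFf : F.filter (fun L => j ∈ L) = ((univ : Finset (Fin k)).powersetCard m).filter
        (fun L => ({y, j} : Finset (Fin k)) ⊆ L) := by
      rw [hF, filter_filter]
      apply filter_congr; intro L _
      simp [insert_subset_iff, and_comm]
    have hcardyj : ({y, j} : Finset (Fin k)).card = 2 := by
      rw [card_insert_of_notMem (by simpa using (Ne.symm hj))]; simp
    by_cases hm : 2 ≤ m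
    · rw [hFf, count_supersets _ m (by rw [hcardyj]; exact hm)]
      rw [hcardyj, Fintype.card_fin, hn2def, if_pos hm]
    · -- m = 1 : no set of size 1 contains both y and j
      have hm1' : m = 1 := by omega
      rw [hn2def, if_neg hm, card_eq_zero, hFf, filter_eq_empty_iff]
      intro L hL hsub
      rw [mem_powersetCard_univ] at hL
      have := card_le_card hsub
      omega
  -- the double sum
  have hS : ∑ L ∈ F, ∑ j ∈ L, p j = p y * (c1 : ℝ) + (1 - p y) * (n2 : ℝ) := by
    have h1 : ∀ L ∈ F, ∑ j ∈ L, p j = ∑ j : Fin k, if j ∈ L then p j else 0 := by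
      intro L _
      rw [Finset.sum_ite_mem, univ_inter]
    rw [Finset.sum_congr rfl h1, Finset.sum_comm]
    have h2 : ∀ j : Fin k, ∑ L ∈ F, (if j ∈ L then p j else 0)
        = p j * ((F.filter (fun L => j ∈ L)).card : ℝ) := by
      intro j
      rw [← Finset.sum_filter, Finset.sum_const, nsmul_eq_mul, mul_comm]
    rw [Finset.sum_congr rfl (fun j _ => h2 j)]
    have hyF : (F.filter (fun L => y ∈ L)) = F := by
      rw [hF, filter_filter]; simp
    rw [← Finset.add_sum_erase _ _ (mem_univ y), hyF, hcard1]
    have h3 : ∀ j ∈ univ.erase y, p j * ((F.filter (fun L => j ∈ L)).card : ℝ)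
        = p j * (n2 : ℝ) := by
      intro j hj
      rw [hcard2 j (mem_erase.mp hj).1]
    rw [Finset.sum_congr rfl h3, ← Finset.sum_mul]
    have h4 : ∑ j ∈ univ.erase y, p j = 1 - p y := by
      rw [Finset.sum_erase_eq_sub (mem_univ y), hsum]
    rw [h4]
  -- key binomial identity
  have hid : (m - 1) * c1 = (k - 1) * n2 := by
    by_cases hm : 2 ≤ m
    · rw [hn2def, if_pos hm, hc1def]
      have e1 : k - 1 = Nat.succ (k - 2) := by omega
      have e2 : m - 1 = Nat.succ (m - 2) := by omega
      rw [e1, e2, Nat.add_one_mul_choose_eq, mul_comm]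
    · have : m = 1 := by omega
      simp [this, hn2def]
  -- real arithmetic
  have hc1pos : 0 < c1 := Nat.choose_pos (by omega)
  have hc1ne : (c1 : ℝ) ≠ 0 := by positivity
  have hkmne : (k : ℝ) - (m : ℝ) ≠ 0 := by
    have : (m : ℝ) < (k : ℝ) := by exact_mod_cast hmk
    linarith
  have hidR : ((m : ℝ) - 1) * (c1 : ℝ) = ((k : ℝ) - 1) * (n2 : ℝ) := by
    have hid' : ((m : ℤ) - 1) * (c1 : ℤ) = ((k : ℤ) - 1) * (n2 : ℤ) := by
      zify [hm1, show 1 ≤ k by omega] at hid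
      exact hid
    exact_mod_cast hid'
  have hsum' : ∑ L ∈ F, (1 / (c1 : ℝ)) * ∑ j ∈ L, p j
      = (1 / (c1 : ℝ)) * (p y * (c1 : ℝ) + (1 - p y) * (n2 : ℝ)) := by
    rw [← Finset.mul_sum, hS]
  rw [hsum']
  field_simp
  linear_combination (1 - p y) * hidR
end

section
/- Let k ≥ 2, 1 ≤ m ≤ k-1, p a pmf on {1,...,k}. Then for every fixed y: p(y) = ((k-1)/m) · Σ_{L ∈ Q_m : y ∉ L} q0(L) − (k-m-1)/m, where q0(L) := (1/C(k-1, m)) Σ_{j ∉ L} p(j) is the conditional law of L given s=0 under the symmetric random-query mechanism. -/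
/-! Swapping the order of summation, `∑_{L} ∑_{j ∉ L} p(j)` over the `m`-subsets `L` of `Y \ {y}`
counts `p(y)` once for each of the `C(k-1, m)` subsets and every other `p(j)` once for each of the
`C(k-2, m)` subsets avoiding `j`. Since the `p(j)` with `j ≠ y` sum to `1 - p(y)`, the normalised sum
is affine in `p(y)`, and `(k-1) C(k-2, m) = (k-1-m) C(k-1, m)` turns it into the stated formula. -/

open Finset

namespace Finset

variable {α R : Type*} [DecidableEq α] [AddCommMonoid R]

theorem sum_powersetCard_sum_sdiff (s : Finset α) (m : ℕ) (f : α → R) :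
    ∑ L ∈ s.powersetCard m, ∑ j ∈ s \ L, f j = (#s - 1).choose m • ∑ j ∈ s, f j := by
  rw [sum_comm' (t' := s) (s' := fun j => (s.erase j).powersetCard m), smul_sum]
  · refine sum_congr rfl fun j hj => ?_
    rw [sum_const, card_powersetCard, card_erase_of_mem hj]
  · intro L j
    simp only [mem_powersetCard, mem_sdiff, subset_erase]
    tauto

theorem sum_compl_eq_sum_compl_add_sum_sdiff [Fintype α] {L t : Finset α} (hL : L ⊆ t)
    (f : α → R) : ∑ j ∈ Lᶜ, f j = ∑ j ∈ tᶜ, f j + ∑ j ∈ t \ L, f j := by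
  rw [← sum_sdiff (compl_subset_compl.mpr hL), add_comm, compl_sdiff_compl]

theorem sum_powersetCard_compl_singleton_sum_compl [Fintype α] (y : α) (m : ℕ) (f : α → R) :
    ∑ L ∈ ({y}ᶜ : Finset α).powersetCard m, ∑ j ∈ Lᶜ, f j
      = (Fintype.card α - 1).choose m • f y
        + (Fintype.card α - 2).choose m • ∑ j ∈ ({y}ᶜ : Finset α), f j := by
  have hsplit : ∀ L ∈ ({y}ᶜ : Finset α).powersetCard m,
      ∑ j ∈ Lᶜ, f j = f y + ∑ j ∈ {y}ᶜ \ L, f j := fun L hL => by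
    rw [sum_compl_eq_sum_compl_add_sum_sdiff (mem_powersetCard.mp hL).1, compl_compl,
      sum_singleton]
  rw [sum_congr rfl hsplit, sum_add_distrib, sum_const, sum_powersetCard_sum_sdiff,
    card_powersetCard, card_compl, card_singleton, Nat.sub_sub]

end Finset

theorem pmf_recovery_from_negative_response_law_general (k m : ℕ) (hm1 : 1 ≤ m)
    (hm2 : m ≤ k - 1) (p : Fin k → ℝ) (hsum : ∑ y, p y = 1)
    (y : Fin k) :
    p y = (((k : ℝ) - 1) / (m : ℝ)) *
        ∑ L ∈ ((Finset.univ : Finset (Fin k)).powersetCard m).filter (fun L => y ∉ L),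
          (1 / (Nat.choose (k - 1) m : ℝ)) * ∑ j ∈ Lᶜ, p j
      - ((k : ℝ) - (m : ℝ) - 1) / (m : ℝ) := by
  have hQ : ((univ : Finset (Fin k)).powersetCard m).filter (fun L => y ∉ L)
      = ({y}ᶜ : Finset (Fin k)).powersetCard m := by
    ext L
    simp only [mem_filter, mem_powersetCard, subset_univ, true_and, subset_compl_singleton]
    tauto
  have hrest : ∑ j ∈ ({y}ᶜ : Finset (Fin k)), p j = 1 - p y := by
    rw [← hsum, ← sum_compl_add_sum {y}, sum_singleton, add_sub_cancel_right]
  rw [hQ, ← mul_sum, sum_powersetCard_compl_singleton_sum_compl, Fintype.card_fin, hrest]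
  obtain ⟨n, rfl⟩ : ∃ n, k = n + 2 := ⟨k - 2, by omega⟩
  have hchoose : (n.choose m : ℝ) * (n + 1) = (n + 1).choose m * ((n + 1 : ℝ) - m) := by
    have h := congrArg (Nat.cast (R := ℝ)) (Nat.choose_mul_succ_eq n m)
    push_cast [Nat.cast_sub (show m ≤ n + 1 by omega)] at h
    exact h
  have hpos : ((n + 1).choose m : ℝ) ≠ 0 := by
    exact_mod_cast (Nat.choose_pos (by omega)).ne'
  simp only [nsmul_eq_mul, Nat.add_sub_cancel, Nat.add_one_sub_one]
  push_cast
  field_simp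
  linear_combination (p y - 1) * hchoose

theorem pmf_recovery_from_negative_response_law (k m : ℕ) (hk : 2 ≤ k) (hm1 : 1 ≤ m)
    (hm2 : m ≤ k - 1) (p : Fin k → ℝ) (hp : ∀ y, 0 ≤ p y) (hsum : ∑ y, p y = 1)
    (y : Fin k) :
    p y = (((k : ℝ) - 1) / (m : ℝ)) *
        ∑ L ∈ ((Finset.univ : Finset (Fin k)).powersetCard m).filter (fun L => y ∉ L),
          (1 / (Nat.choose (k - 1) m : ℝ)) * ∑ j ∈ Lᶜ, p j
      - ((k : ℝ) - (m : ℝ) - 1) / (m : ℝ) :=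
  pmf_recovery_from_negative_response_law_general k m hm1 hm2 p hsum y
end

section
/- (Pointwise risk recovery.) Let k ≥ 2, 1 ≤ m ≤ k-1, ℓ : Y → ℝ, and fix a true label y. With A := (1/C(k-1,m-1)) Σ_{L : y∈L} ℓ̄(L) and B := (1/C(k-1,m)) Σ_{L : y∉L} ℓ̄(L), we have m·A − (m−1)·B = ℓ(y). -/
open Finset

variable {α : Type*} [DecidableEq α]

lemma insert_injOn_powersetCard (t : Finset α) (j : α) (r : ℕ) :
    Set.InjOn (insert j) (↑((t.erase j).powersetCard r) : Set (Finset α)) := by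
  intro M1 h1 M2 h2 h
  have hj1 : j ∉ M1 := fun h' => (mem_erase.1 ((mem_powersetCard.1 h1).1 h')).1 rfl
  have hj2 : j ∉ M2 := fun h' => (mem_erase.1 ((mem_powersetCard.1 h2).1 h')).1 rfl
  rw [← erase_insert hj1, ← erase_insert hj2, h]

lemma filter_mem_powersetCard (t : Finset α) (j : α) (hj : j ∈ t) (r : ℕ) (hr : 1 ≤ r) :
    (t.powersetCard r).filter (fun L => j ∈ L) =
      ((t.erase j).powersetCard (r - 1)).image (insert j) := by
  ext L
  simp only [mem_filter, mem_powersetCard, mem_image]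
  constructor
  · rintro ⟨⟨hsub, hcard⟩, hjL⟩
    refine ⟨L.erase j, ⟨?_, ?_⟩, insert_erase hjL⟩
    · exact fun x hx => mem_erase.2 ⟨(mem_erase.1 hx).1, hsub (mem_erase.1 hx).2⟩
    · rw [card_erase_of_mem hjL, hcard]
  · rintro ⟨M, ⟨hMsub, hMcard⟩, rfl⟩
    have hjM : j ∉ M := fun h => (mem_erase.1 (hMsub h)).1 rfl
    have hMt : M ⊆ t := hMsub.trans (erase_subset _ _)
    refine ⟨⟨?_, ?_⟩, mem_insert_self _ _⟩
    · exact insert_subset hj hMt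
    · rw [card_insert_of_notMem hjM, hMcard]; omega

lemma card_filter_mem_powersetCard (t : Finset α) (j : α) (hj : j ∈ t) (r : ℕ) (hr : 1 ≤ r) :
    ((t.powersetCard r).filter (fun L => j ∈ L)).card = (t.card - 1).choose (r - 1) := by
  rw [filter_mem_powersetCard t j hj r hr,
    card_image_of_injOn (insert_injOn_powersetCard t j (r - 1)), card_powersetCard,
    card_erase_of_mem hj]

lemma sum_sum_powersetCard (t : Finset α) (r : ℕ) (hr : 1 ≤ r) (f : α → ℝ) :
    ∑ M ∈ t.powersetCard r, ∑ j ∈ M, f j =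
      ((t.card - 1).choose (r - 1) : ℝ) * ∑ j ∈ t, f j := by
  have h1 : ∀ M ∈ t.powersetCard r, ∑ j ∈ M, f j = ∑ j ∈ t, if j ∈ M then f j else 0 := by
    intro M hM
    rw [sum_ite_mem, inter_eq_right.2 (mem_powersetCard.1 hM).1]
  rw [sum_congr rfl h1, sum_comm, mul_sum]
  refine sum_congr rfl fun j hj => ?_
  rw [sum_ite, sum_const_zero, add_zero, sum_const,
    card_filter_mem_powersetCard t j hj r hr, nsmul_eq_mul, mul_comm]

theorem pointwise_risk_recovery (k m : ℕ) (hk : 2 ≤ k) (hm1 : 1 ≤ m)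
    (hm2 : m ≤ k - 1) (ℓ : Fin k → ℝ) (y : Fin k) :
    (m : ℝ) * ((1 / (Nat.choose (k - 1) (m - 1) : ℝ)) *
        ∑ L ∈ ((Finset.univ : Finset (Fin k)).powersetCard m).filter (fun L => y ∈ L),
          (1 / (m : ℝ)) * ∑ j ∈ L, ℓ j)
      - ((m : ℝ) - 1) * ((1 / (Nat.choose (k - 1) m : ℝ)) *
        ∑ L ∈ ((Finset.univ : Finset (Fin k)).powersetCard m).filter (fun L => y ∉ L),
          (1 / (m : ℝ)) * ∑ j ∈ L, ℓ j) = ℓ y := by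
  set t : Finset (Fin k) := (univ : Finset (Fin k)).erase y with ht
  have htcard : t.card = k - 1 := by
    rw [ht, card_erase_of_mem (mem_univ y), card_univ, Fintype.card_fin]
  have hfilter1 : ((univ : Finset (Fin k)).powersetCard m).filter (fun L => y ∈ L) =
      (t.powersetCard (m - 1)).image (insert y) :=
    filter_mem_powersetCard univ y (mem_univ y) m hm1
  have hfilter2 : ((univ : Finset (Fin k)).powersetCard m).filter (fun L => y ∉ L) =
      t.powersetCard m := by
    ext L
    simp only [mem_filter, mem_powersetCard, ht, subset_erase, subset_univ, true_and]
    tauto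
  -- rewrite first sum
  have hS1 : ∑ L ∈ ((univ : Finset (Fin k)).powersetCard m).filter (fun L => y ∈ L),
      (1 / (m : ℝ)) * ∑ j ∈ L, ℓ j =
      ∑ M ∈ t.powersetCard (m - 1), (1 / (m : ℝ)) * (ℓ y + ∑ j ∈ M, ℓ j) := by
    rw [hfilter1, sum_image (insert_injOn_powersetCard univ y (m - 1))]
    refine sum_congr rfl fun M hM => ?_
    have hyM : y ∉ M := fun h => (mem_erase.1 ((mem_powersetCard.1 hM).1 h)).1 rfl
    rw [sum_insert hyM]
  rw [hS1, hfilter2]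
  obtain rfl | h2 : m = 1 ∨ 2 ≤ m := by omega
  · -- m = 1
    simp only [Nat.sub_self, powersetCard_zero, sum_singleton, Nat.choose_zero_right,
      Nat.cast_one, sum_empty, add_zero, Nat.cast_ofNat]
    norm_num
  · -- 2 ≤ m
    rw [← mul_sum, ← mul_sum, sum_add_distrib, sum_const, card_powersetCard, htcard,
      sum_sum_powersetCard t m hm1 ℓ, sum_sum_powersetCard t (m - 1) (by omega) ℓ, htcard]
    set a : ℝ := ∑ j ∈ t, ℓ j with ha
    have hc1 : 0 < (k - 1).choose (m - 1) := Nat.choose_pos (by omega)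
    have hc2 : 0 < (k - 1).choose m := Nat.choose_pos hm2
    have H1 : ((k - 1).choose (m - 1)) * (m - 1) = (k - 1) * ((k - 2).choose (m - 2)) := by
      have := Nat.add_one_mul_choose_eq (k - 2) (m - 2)
      have e1 : (k - 2) + 1 = k - 1 := by omega
      have e2 : (m - 2) + 1 = m - 1 := by omega
      rw [e1, e2] at this
      omega
    have H2 : ((k - 1).choose m) * m = (k - 1) * ((k - 2).choose (m - 1)) := by
      have := Nat.add_one_mul_choose_eq (k - 2) (m - 1)
      have e1 : (k - 2) + 1 = k - 1 := by omega
      have e2 : (m - 1) + 1 = m := by omega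
      rw [e1, e2] at this
      omega
    have e3 : (k - 1 - 1 : ℕ) = k - 2 := by omega
    have e4 : (m - 1 - 1 : ℕ) = m - 2 := by omega
    rw [e3, e4]
    have h1R : ((k-1).choose (m-1) : ℝ) * ((m : ℝ) - 1)
        = ((k:ℝ) - 1) * ((k-2).choose (m-2) : ℝ) := by
      have := congrArg (Nat.cast : ℕ → ℝ) H1
      push_cast [Nat.cast_sub hm1, Nat.cast_sub (by omega : 1 ≤ k)] at this
      linarith
    have h2R : ((k-1).choose m : ℝ) * (m : ℝ) = ((k:ℝ) - 1) * ((k-2).choose (m-1) : ℝ) := by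
      have := congrArg (Nat.cast : ℕ → ℝ) H2
      push_cast [Nat.cast_sub (by omega : 1 ≤ k)] at this
      linarith
    have hm0 : (m : ℝ) ≠ 0 := by positivity
    have hc1R : ((k-1).choose (m-1) : ℝ) ≠ 0 := Nat.cast_ne_zero.2 hc1.ne'
    have hc2R : ((k-1).choose m : ℝ) ≠ 0 := Nat.cast_ne_zero.2 hc2.ne'
    field_simp
    linear_combination (a * ((k-2).choose (m-2) : ℝ)) * h2R
      - (a * ((k-2).choose (m-1) : ℝ)) * h1R
end

section
/- (Deviation of the corrected estimator.) Under the setup of the previous statement, additionally let φ be the scalar correction with Lipschitz constant L_φ = max{1, κ}. Then for any δ ∈ (0,1), with probability at least 1 − δ: |φ(Ẑ) − R| ≤ L_φ · C · sqrt( (1/2) log(2/δ) · ( m²/n1 + (m−1)²/n0 ) ) + (κ+1)(2m−1) C · exp( −2ζ² / ( C² ( m²/n1 + (m−1)²/n0 ) ) ). -/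
open MeasureTheory ProbabilityTheory Real

section Helpers

lemma key_ineq' {p : ℝ} (hp0 : 0 ≤ p) (hp1 : p ≤ 1) (h : ℝ) :
    1 - p + p * exp h ≤ exp (p * h + h ^ 2 / 8) := by
  have hD : ∀ x : ℝ, 0 < 1 - p + p * exp x := by
    intro x
    rcases eq_or_lt_of_le hp0 with hp | hp
    · simp [← hp]
    · have := exp_pos x
      nlinarith
  set f : ℝ → ℝ := fun x => p * x + x ^ 2 / 8 - Real.log (1 - p + p * exp x) with hf
  set g : ℝ → ℝ := fun x => p + x / 4 - p * exp x / (1 - p + p * exp x) with hg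
  have hfd : ∀ x, HasDerivAt f (g x) x := by
    intro x
    have h1 : HasDerivAt (fun x : ℝ => 1 - p + p * exp x) (p * exp x) x := by
      simpa using (((Real.hasDerivAt_exp x).const_mul p).const_add (1 - p))
    have h2 : HasDerivAt (fun x => Real.log (1 - p + p * exp x))
        (p * exp x / (1 - p + p * exp x)) x := h1.log (hD x).ne'
    have h3 : HasDerivAt (fun x : ℝ => p * x + x ^ 2 / 8) (p + x / 4) x := by
      have := ((hasDerivAt_pow 2 x).div_const 8).const_add 0
      have h4 : HasDerivAt (fun x : ℝ => p * x) p x := by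
        simpa using (hasDerivAt_id x).const_mul p
      have h5 : HasDerivAt (fun x : ℝ => x ^ 2 / 8) (x / 4) x := by
        have := (hasDerivAt_pow 2 x).div_const 8
        exact this.congr_deriv (by norm_num; ring)
      exact h4.add h5
    exact h3.sub h2
  have hgd : ∀ x, HasDerivAt g (1 / 4 - (1 - p) * (p * exp x) / (1 - p + p * exp x) ^ 2) x := by
    intro x
    have h1 : HasDerivAt (fun x : ℝ => 1 - p + p * exp x) (p * exp x) x := by
      simpa using (((Real.hasDerivAt_exp x).const_mul p).const_add (1 - p))
    have h2 : HasDerivAt (fun x : ℝ => p * exp x) (p * exp x) x :=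
      (Real.hasDerivAt_exp x).const_mul p
    have h3 := h2.div h1 (hD x).ne'
    have h4 : HasDerivAt (fun x : ℝ => p + x / 4) (1 / 4) x := by
      simpa using ((hasDerivAt_id x).div_const 4).const_add p
    have := h4.sub h3
    exact this.congr_deriv (by field_simp; ring)
  have hg' : ∀ x, 0 ≤ 1 / 4 - (1 - p) * (p * exp x) / (1 - p + p * exp x) ^ 2 := by
    intro x
    rw [sub_nonneg, div_le_iff₀ (pow_pos (hD x) 2)]
    nlinarith [sq_nonneg ((1 - p) - p * exp x), exp_pos x]
  have hgmono : Monotone g :=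
    monotone_of_deriv_nonneg (fun x => (hgd x).differentiableAt) (fun x => by
      rw [(hgd x).deriv]; exact hg' x)
  have hg0 : g 0 = 0 := by
    simp only [hg]
    rw [Real.exp_zero]
    have : 1 - p + p * 1 = 1 := by ring
    rw [this]
    simp
  have hf0 : f 0 = 0 := by
    simp only [hf]
    rw [Real.exp_zero]
    norm_num
  have hfnn : ∀ x, 0 ≤ f x := by
    intro x
    rcases le_total 0 x with hx | hx
    · have : MonotoneOn f (Set.Ici (0:ℝ)) := by
        apply monotoneOn_of_deriv_nonneg (convex_Ici 0)
          (Continuous.continuousOn (by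
            have : ∀ x, DifferentiableAt ℝ f x := fun x => (hfd x).differentiableAt
            exact Differentiable.continuous this))
          (fun x _ => (hfd x).differentiableAt.differentiableWithinAt)
        intro y hy
        rw [(hfd y).deriv]
        have : (0:ℝ) ≤ y := le_of_lt (by simpa using hy)
        calc (0:ℝ) = g 0 := hg0.symm
          _ ≤ g y := hgmono this
      have := this (Set.self_mem_Ici) (Set.mem_Ici.mpr hx) hx
      rwa [hf0] at this
    · have : AntitoneOn f (Set.Iic (0:ℝ)) := by
        apply antitoneOn_of_deriv_nonpos (convex_Iic 0)
          (Continuous.continuousOn (by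
            have : ∀ x, DifferentiableAt ℝ f x := fun x => (hfd x).differentiableAt
            exact Differentiable.continuous this))
          (fun x _ => (hfd x).differentiableAt.differentiableWithinAt)
        intro y hy
        rw [(hfd y).deriv]
        have : y ≤ (0:ℝ) := le_of_lt (by simpa using hy)
        calc g y ≤ g 0 := hgmono this
          _ = 0 := hg0
      have := this (Set.mem_Iic.mpr hx) (Set.self_mem_Iic) hx
      rwa [hf0] at this
  have := hfnn h
  simp only [hf, sub_nonneg] at this
  calc 1 - p + p * exp h = exp (Real.log (1 - p + p * exp h)) := (Real.exp_log (hD h)).symm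
    _ ≤ exp (p * h + h ^ 2 / 8) := Real.exp_le_exp.mpr this

variable {Ω : Type*} [MeasurableSpace Ω] {μ : Measure Ω} [IsProbabilityMeasure μ]

lemma integrable_of_bdd' {X : Ω → ℝ} (hX : Measurable X) {a b : ℝ}
    (hab : ∀ᵐ ω ∂μ, X ω ∈ Set.Icc a b) : Integrable X μ := by
  refine (integrable_const (max |a| |b|)).mono' hX.aestronglyMeasurable ?_
  filter_upwards [hab] with ω hω
  rw [Real.norm_eq_abs, abs_le]
  refine ⟨le_trans ?_ hω.1, le_trans hω.2 (le_trans (le_abs_self b) (le_max_right _ _))⟩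
  calc -(max |a| |b|) ≤ -|a| := by simp
    _ ≤ a := neg_abs_le a

lemma integrable_exp_of_bdd' {X : Ω → ℝ} (hX : Measurable X) {a b : ℝ} (t : ℝ)
    (hab : ∀ᵐ ω ∂μ, X ω ∈ Set.Icc a b) : Integrable (fun ω => exp (t * X ω)) μ := by
  refine (integrable_const (exp (|t| * max |a| |b|))).mono'
    ((hX.const_mul t).exp).aestronglyMeasurable ?_
  filter_upwards [hab] with ω hω
  rw [Real.norm_eq_abs, abs_of_pos (exp_pos _), exp_le_exp]
  calc t * X ω ≤ |t * X ω| := le_abs_self _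
    _ = |t| * |X ω| := abs_mul t (X ω)
    _ ≤ |t| * max |a| |b| := by
        refine mul_le_mul_of_nonneg_left ?_ (abs_nonneg t)
        rw [abs_le]
        refine ⟨le_trans ?_ hω.1, le_trans hω.2 (le_trans (le_abs_self b) (le_max_right _ _))⟩
        calc -(max |a| |b|) ≤ -|a| := by simp
          _ ≤ a := neg_abs_le a

lemma hoeffding_lemma' {X : Ω → ℝ} (hX : Measurable X) {a b : ℝ} (t : ℝ)
    (hab : ∀ᵐ ω ∂μ, X ω ∈ Set.Icc a b) (h0 : ∫ ω, X ω ∂μ = 0) :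
    mgf X μ t ≤ exp (t ^ 2 * (b - a) ^ 2 / 8) := by
  have hint : Integrable X μ := integrable_of_bdd' hX hab
  have ha0 : a ≤ 0 := by
    calc a = ∫ _, a ∂μ := by simp
      _ ≤ ∫ ω, X ω ∂μ := integral_mono_ae (integrable_const a) hint (by
          filter_upwards [hab] with ω hω using hω.1)
      _ = 0 := h0
  have hb0 : 0 ≤ b := by
    calc (0:ℝ) = ∫ ω, X ω ∂μ := h0.symm
      _ ≤ ∫ _, b ∂μ := integral_mono_ae hint (integrable_const b) (by
          filter_upwards [hab] with ω hω using hω.2)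
      _ = b := by simp
  rcases eq_or_lt_of_le (ha0.trans hb0 : a ≤ b) with hab_eq | hlt
  · have ha : a = 0 := le_antisymm ha0 (hab_eq ▸ hb0)
    have hb : b = 0 := by rw [← hab_eq, ha]
    have hX0 : ∀ᵐ ω ∂μ, X ω = 0 := by
      filter_upwards [hab] with ω hω
      exact le_antisymm (hb ▸ hω.2) (ha ▸ hω.1)
    have hmgf : mgf X μ t = 1 := by
      rw [mgf, integral_congr_ae (g := fun _ => (1:ℝ)) (by
        filter_upwards [hX0] with ω hω; simp [hω])]
      simp
    rw [hmgf]
    have hnn : (0:ℝ) ≤ t ^ 2 * (b - a) ^ 2 / 8 := by positivity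
    calc (1:ℝ) = exp 0 := by simp
      _ ≤ _ := exp_le_exp.mpr hnn
  · have hba : 0 < b - a := by linarith
    set p : ℝ := -a / (b - a) with hp
    have hp0 : 0 ≤ p := by
      apply div_nonneg (by linarith) hba.le
    have hp1 : p ≤ 1 := by
      rw [hp, div_le_one hba]; linarith
    -- pointwise convexity bound
    have hpt : ∀ᵐ ω ∂μ, exp (t * X ω) ≤
        (exp (t * b) - exp (t * a)) / (b - a) * X ω +
          (b * exp (t * a) - a * exp (t * b)) / (b - a) := by
      filter_upwards [hab] with ω hω
      set x := X ω
      have hl1 : (0:ℝ) ≤ (b - x) / (b - a) := div_nonneg (by linarith [hω.2]) hba.le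
      have hl2 : (0:ℝ) ≤ (x - a) / (b - a) := div_nonneg (by linarith [hω.1]) hba.le
      have hls : (b - x) / (b - a) + (x - a) / (b - a) = 1 := by
        field_simp
        ring
      have hne : b - a ≠ 0 := hba.ne'
      have := convexOn_exp.2 (Set.mem_univ (t * a)) (Set.mem_univ (t * b)) hl1 hl2 hls
      simp only [smul_eq_mul] at this
      have harg : (b - x) / (b - a) * (t * a) + (x - a) / (b - a) * (t * b) = t * x := by
        field_simp
        ring
      rw [harg] at this
      calc exp (t * x) ≤ (b - x) / (b - a) * exp (t * a) + (x - a) / (b - a) * exp (t * b) := by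
            simpa using this
        _ = (exp (t * b) - exp (t * a)) / (b - a) * x +
            (b * exp (t * a) - a * exp (t * b)) / (b - a) := by
            have hne : b - a ≠ 0 := hba.ne'
            field_simp
            ring
    -- integrate
    have hintexp : Integrable (fun ω => exp (t * X ω)) μ := integrable_exp_of_bdd' hX t hab
    have hintrhs : Integrable (fun ω => (exp (t * b) - exp (t * a)) / (b - a) * X ω +
        (b * exp (t * a) - a * exp (t * b)) / (b - a)) μ :=
      (hint.const_mul _).add (integrable_const _)
    have hstep : mgf X μ t ≤ (b * exp (t * a) - a * exp (t * b)) / (b - a) := by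
      rw [mgf]
      calc ∫ ω, exp (t * X ω) ∂μ ≤ ∫ ω, ((exp (t * b) - exp (t * a)) / (b - a) * X ω +
            (b * exp (t * a) - a * exp (t * b)) / (b - a)) ∂μ :=
          integral_mono_ae hintexp hintrhs hpt
        _ = (exp (t * b) - exp (t * a)) / (b - a) * (∫ ω, X ω ∂μ) +
            (b * exp (t * a) - a * exp (t * b)) / (b - a) := by
          rw [integral_add (hint.const_mul _) (integrable_const _), integral_const_mul]
          simp
        _ = (b * exp (t * a) - a * exp (t * b)) / (b - a) := by rw [h0]; ring
    -- rewrite and apply key inequality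
    have hkey := key_ineq' hp0 hp1 (t * (b - a))
    have hrw : (b * exp (t * a) - a * exp (t * b)) / (b - a) =
        exp (t * a) * (1 - p + p * exp (t * (b - a))) := by
      rw [hp]
      have hexp : exp (t * b) = exp (t * a) * exp (t * (b - a)) := by
        rw [← exp_add]; ring_nf
      rw [hexp]
      field_simp
      ring
    have hfinal : exp (t * a) * (1 - p + p * exp (t * (b - a))) ≤
        exp (t ^ 2 * (b - a) ^ 2 / 8) := by
      calc exp (t * a) * (1 - p + p * exp (t * (b - a)))
          ≤ exp (t * a) * exp (p * (t * (b - a)) + (t * (b - a)) ^ 2 / 8) := by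
            exact mul_le_mul_of_nonneg_left hkey (exp_pos _).le
        _ = exp (t * a + p * (t * (b - a)) + (t * (b - a)) ^ 2 / 8) := by
            rw [← exp_add]; ring_nf
        _ = exp (t ^ 2 * (b - a) ^ 2 / 8) := by
            congr 1
            rw [hp]
            field_simp
            ring
    calc mgf X μ t ≤ _ := hstep
      _ = _ := hrw
      _ ≤ _ := hfinal

lemma hoeffding_sum_centered' {ι : Type*} [Fintype ι] (X : ι → Ω → ℝ)
    (hmeas : ∀ i, Measurable (X i))
    (hindep : iIndepFun X μ) (a b : ι → ℝ)
    (hbdd : ∀ i, ∀ᵐ ω ∂μ, X i ω ∈ Set.Icc (a i) (b i)) (h0 : ∀ i, ∫ ω, X i ω ∂μ = 0)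
    (ε : ℝ) (hε : 0 ≤ ε) (hV : 0 < ∑ i, (b i - a i) ^ 2) :
    (μ {ω | ε ≤ ∑ i, X i ω}).toReal ≤ exp (-2 * ε ^ 2 / ∑ i, (b i - a i) ^ 2) := by
  set V : ℝ := ∑ i, (b i - a i) ^ 2 with hVdef
  set t : ℝ := 4 * ε / V with htdef
  have ht : 0 ≤ t := by positivity
  have hinti : ∀ i ∈ Finset.univ, Integrable (fun ω => exp (t * X i ω)) μ :=
    fun i _ => integrable_exp_of_bdd' (hmeas i) t (hbdd i)
  have hintS : Integrable (fun ω => exp (t * (∑ i, X i) ω)) μ :=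
    hindep.integrable_exp_mul_sum hmeas hinti
  have hchernoff := measure_ge_le_exp_mul_mgf (μ := μ) (X := ∑ i, X i) ε ht hintS
  have hset : {ω | ε ≤ (∑ i, X i) ω} = {ω | ε ≤ ∑ i, X i ω} := by
    ext ω; simp [Finset.sum_apply]
  rw [hset] at hchernoff
  have hmgf : mgf (∑ i, X i) μ t ≤ exp (t ^ 2 * V / 8) := by
    rw [hindep.mgf_sum hmeas]
    calc ∏ i, mgf (X i) μ t ≤ ∏ i, exp (t ^ 2 * (b i - a i) ^ 2 / 8) :=
        Finset.prod_le_prod (fun i _ => mgf_nonneg) (fun i _ =>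
          hoeffding_lemma' (hmeas i) t (hbdd i) (h0 i))
      _ = exp (∑ i, t ^ 2 * (b i - a i) ^ 2 / 8) := (Real.exp_sum _ _).symm
      _ = exp (t ^ 2 * V / 8) := by
          congr 1
          rw [hVdef, Finset.mul_sum, Finset.sum_div]
  calc (μ {ω | ε ≤ ∑ i, X i ω}).toReal ≤ exp (-t * ε) * mgf (∑ i, X i) μ t := hchernoff
    _ ≤ exp (-t * ε) * exp (t ^ 2 * V / 8) :=
        mul_le_mul_of_nonneg_left hmgf (exp_pos _).le
    _ = exp (-t * ε + t ^ 2 * V / 8) := (exp_add _ _).symm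
    _ = exp (-2 * ε ^ 2 / V) := by
        congr 1
        rw [htdef]
        field_simp
        ring

end Helpers

set_option maxHeartbeats 2000000 in
/-- Deviation bound for the corrected estimator. -/
theorem corrected_estimator_deviation {Ω : Type*} [MeasurableSpace Ω]
    (μ : Measure Ω) [IsProbabilityMeasure μ]
    (m n1 n0 : ℕ) (hm : 1 ≤ m) (hn1 : 1 ≤ n1) (hn0 : 1 ≤ n0)
    (C ζ R κ δ : ℝ) (hC : 0 < C) (hζ : 0 < ζ) (hκ : 0 ≤ κ)
    (hδ : δ ∈ Set.Ioo (0 : ℝ) 1)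
    (W : (Fin n1 ⊕ Fin n0) → Ω → ℝ)
    (hmeas : ∀ i, Measurable (W i))
    (hindep : iIndepFun W μ)
    (hbdd : ∀ i, ∀ᵐ ω ∂μ, W i ω ∈ Set.Icc (0 : ℝ) C)
    (Zhat : Ω → ℝ)
    (hZ : Zhat = fun ω =>
      (m : ℝ) * ((1 / (n1 : ℝ)) * ∑ i, W (Sum.inl i) ω) -
        ((m : ℝ) - 1) * ((1 / (n0 : ℝ)) * ∑ j, W (Sum.inr j) ω))
    (hmean : ∫ ω, Zhat ω ∂μ = R) (hRζ : ζ ≤ R) :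
    (μ {ω | |(if 0 ≤ Zhat ω then Zhat ω else κ * |Zhat ω|) - R| ≤
        max 1 κ * C *
          Real.sqrt ((1 / 2) * Real.log (2 / δ) *
            ((m : ℝ) ^ 2 / (n1 : ℝ) + ((m : ℝ) - 1) ^ 2 / (n0 : ℝ))) +
        (κ + 1) * (2 * (m : ℝ) - 1) * C *
          Real.exp (-2 * ζ ^ 2 /
            (C ^ 2 * ((m : ℝ) ^ 2 / (n1 : ℝ) + ((m : ℝ) - 1) ^ 2 / (n0 : ℝ))))}).toReal
      ≥ 1 - δ := by
  obtain ⟨hδ0, hδ1⟩ := hδ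
  have hn1R : (0:ℝ) < (n1:ℝ) := by exact_mod_cast hn1
  have hn0R : (0:ℝ) < (n0:ℝ) := by exact_mod_cast hn0
  have hmR : (1:ℝ) ≤ (m:ℝ) := by exact_mod_cast hm
  set S : ℝ := (m : ℝ) ^ 2 / (n1 : ℝ) + ((m : ℝ) - 1) ^ 2 / (n0 : ℝ) with hSdef
  have hS : 0 < S := by
    have h1 : (0:ℝ) < (m:ℝ)^2 / n1 := div_pos (by nlinarith) hn1R
    have h2 : (0:ℝ) ≤ ((m:ℝ)-1)^2 / n0 := by positivity
    rw [hSdef]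
    linarith
  -- the scaled variables
  set c : (Fin n1 ⊕ Fin n0) → ℝ :=
    Sum.elim (fun _ => (m:ℝ) / n1) (fun _ => -(((m:ℝ) - 1) / n0)) with hc
  set X : (Fin n1 ⊕ Fin n0) → Ω → ℝ := fun i ω => c i * W i ω with hX
  have hXmeas : ∀ i, Measurable (X i) := fun i => (hmeas i).const_mul _
  have hXindep : iIndepFun X μ := by
    have := hindep.comp (fun i (x : ℝ) => c i * x) (fun i => measurable_id.const_mul _)
    exact this
  set a : (Fin n1 ⊕ Fin n0) → ℝ := fun i => min (c i * C) 0 with ha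
  set b : (Fin n1 ⊕ Fin n0) → ℝ := fun i => max (c i * C) 0 with hb
  have hXbdd : ∀ i, ∀ᵐ ω ∂μ, X i ω ∈ Set.Icc (a i) (b i) := by
    intro i
    filter_upwards [hbdd i] with ω hω
    obtain ⟨hw0, hwC⟩ := hω
    simp only [hX, ha, hb, Set.mem_Icc]
    rcases le_total 0 (c i) with hci | hci
    · constructor
      · exact le_trans (min_le_right _ _) (mul_nonneg hci hw0)
      · exact le_trans (mul_le_mul_of_nonneg_left hwC hci) (le_max_left _ _)
    · constructor
      · exact le_trans (min_le_left _ _) (by nlinarith)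
      · exact le_trans (by nlinarith) (le_max_right _ _)
  have hXint : ∀ i, Integrable (X i) μ := fun i => integrable_of_bdd' (hXmeas i) (hXbdd i)
  -- sum of squared widths
  have hwidth : ∀ i, (b i - a i) ^ 2 = c i ^ 2 * C ^ 2 := by
    intro i
    have : b i - a i = |c i * C| := by
      rw [hb, ha]
      rw [max_sub_min_eq_abs]
      simp
    rw [this, ← abs_pow]
    rw [abs_of_nonneg (by positivity), mul_pow]
  have hVsum : ∑ i, (b i - a i) ^ 2 = C ^ 2 * S := by
    simp only [hwidth]
    rw [Fintype.sum_sum_type]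
    simp only [hc, Sum.elim_inl, Sum.elim_inr, Finset.sum_const, Finset.card_univ,
      Fintype.card_fin, nsmul_eq_mul]
    rw [hSdef]
    field_simp
  have hVpos : 0 < ∑ i, (b i - a i) ^ 2 := by rw [hVsum]; positivity
  -- Zhat is the sum
  have hZsum : ∀ ω, Zhat ω = ∑ i, X i ω := by
    intro ω
    rw [hZ]
    simp only [hX]
    rw [Fintype.sum_sum_type]
    simp only [hc, Sum.elim_inl, Sum.elim_inr]
    rw [← Finset.mul_sum, ← Finset.mul_sum]
    field_simp
    ring
  -- centered variables
  set Y : (Fin n1 ⊕ Fin n0) → Ω → ℝ := fun i ω => X i ω - ∫ ω', X i ω' ∂μ with hY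
  have hYmeas : ∀ i, Measurable (Y i) := fun i => (hXmeas i).sub_const _
  have hYindep : iIndepFun Y μ := by
    have := hindep.comp (fun i (x : ℝ) => c i * x - ∫ ω', X i ω' ∂μ)
      (fun i => (measurable_id.const_mul _).sub_const _)
    exact this
  have hYbdd : ∀ i, ∀ᵐ ω ∂μ, Y i ω ∈ Set.Icc (a i - ∫ ω', X i ω' ∂μ)
      (b i - ∫ ω', X i ω' ∂μ) := by
    intro i
    filter_upwards [hXbdd i] with ω hω
    exact ⟨by simp only [hY]; linarith [hω.1], by simp only [hY]; linarith [hω.2]⟩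
  have hY0 : ∀ i, ∫ ω, Y i ω ∂μ = 0 := by
    intro i
    simp only [hY]
    rw [integral_sub (hXint i) (integrable_const _)]
    simp
  have hYwidth : ∑ i, ((b i - ∫ ω', X i ω' ∂μ) - (a i - ∫ ω', X i ω' ∂μ)) ^ 2 =
      ∑ i, (b i - a i) ^ 2 := by
    apply Finset.sum_congr rfl
    intro i _
    ring_nf
  have hsumY : ∀ ω, ∑ i, Y i ω = Zhat ω - R := by
    intro ω
    simp only [hY]
    rw [Finset.sum_sub_distrib, ← hZsum ω]
    congr 1
    rw [← hmean]
    rw [show (fun ω => Zhat ω) = fun ω => ∑ i, X i ω from funext hZsum]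
    rw [integral_finset_sum _ (fun i _ => hXint i)]
  -- epsilon
  set ε : ℝ := C * Real.sqrt ((1 / 2) * Real.log (2 / δ) * S) with hε
  have hlog : 0 < Real.log (2 / δ) := by
    apply Real.log_pos
    rw [lt_div_iff₀ hδ0]
    linarith
  have hεpos : 0 < ε := by
    apply mul_pos hC
    apply Real.sqrt_pos.mpr
    positivity
  have hε2 : ε ^ 2 = C ^ 2 * ((1 / 2) * Real.log (2 / δ) * S) := by
    rw [hε, mul_pow, Real.sq_sqrt (by positivity)]
  -- tail bounds
  have htail : exp (-2 * ε ^ 2 / ∑ i, (b i - a i) ^ 2) = δ / 2 := by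
    rw [hVsum, hε2]
    have harg : -2 * (C ^ 2 * (1 / 2 * Real.log (2 / δ) * S)) / (C ^ 2 * S) =
        -Real.log (2 / δ) := by
      field_simp
    rw [harg, Real.exp_neg, Real.exp_log (by positivity)]
    field_simp
  have hup : (μ {ω | ε ≤ ∑ i, Y i ω}).toReal ≤ δ / 2 := by
    rw [← htail]
    exact hoeffding_sum_centered' Y hYmeas hYindep _ _ hYbdd hY0 ε hεpos.le
      (hYwidth ▸ hVpos) |>.trans_eq (by rw [hYwidth])
  have hdown : (μ {ω | ε ≤ -∑ i, Y i ω}).toReal ≤ δ / 2 := by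
    have hnegindep : iIndepFun (fun i ω => -Y i ω) μ := by
      have := hindep.comp (fun i (x : ℝ) => -(c i * x - ∫ ω', X i ω' ∂μ))
        (fun i => ((measurable_id.const_mul _).sub_const _).neg)
      exact this
    have hnegbdd : ∀ i, ∀ᵐ ω ∂μ, -Y i ω ∈ Set.Icc (-(b i - ∫ ω', X i ω' ∂μ))
        (-(a i - ∫ ω', X i ω' ∂μ)) := by
      intro i
      filter_upwards [hYbdd i] with ω hω
      exact ⟨neg_le_neg hω.2, neg_le_neg hω.1⟩
    have hneg0 : ∀ i, ∫ ω, -Y i ω ∂μ = 0 := by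
      intro i
      rw [integral_neg, hY0 i, neg_zero]
    have hnegwidth : ∑ i, (-(a i - ∫ ω', X i ω' ∂μ) - -(b i - ∫ ω', X i ω' ∂μ)) ^ 2 =
        ∑ i, (b i - a i) ^ 2 := by
      apply Finset.sum_congr rfl
      intro i _
      ring_nf
    have := hoeffding_sum_centered' (fun i ω => -Y i ω) (fun i => (hYmeas i).neg)
      hnegindep _ _ hnegbdd hneg0 ε hεpos.le (hnegwidth ▸ hVpos)
    rw [hnegwidth, htail] at this
    have hseteq : {ω | ε ≤ ∑ i, -Y i ω} = {ω | ε ≤ -∑ i, Y i ω} := by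
      ext ω
      rw [Set.mem_setOf_eq, Set.mem_setOf_eq, ← Finset.sum_neg_distrib]
    rw [← hseteq]
    exact this
  -- bad event
  set Bad : Set Ω := {ω | ε < |Zhat ω - R|} with hBad
  have hZm : Measurable Zhat := by
    rw [hZ]
    apply Measurable.sub
    · exact (measurable_const.mul (Finset.measurable_sum _ (fun i _ => hmeas _))).const_mul _
    · exact (measurable_const.mul (Finset.measurable_sum _ (fun i _ => hmeas _))).const_mul _
  have hBadMeas : MeasurableSet Bad :=
    measurableSet_lt measurable_const ((hZm.sub_const R).abs)
  have hBadle : (μ Bad).toReal ≤ δ := by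
    have hsub : Bad ⊆ {ω | ε ≤ ∑ i, Y i ω} ∪ {ω | ε ≤ -∑ i, Y i ω} := by
      intro ω hω
      rw [hBad, Set.mem_setOf_eq, ← hsumY ω] at hω
      rcases abs_cases (∑ i, Y i ω) with ⟨heq, _⟩ | ⟨heq, _⟩
      · left; rw [Set.mem_setOf_eq]; linarith [hω]
      · right; rw [Set.mem_setOf_eq]; linarith [hω]
    calc (μ Bad).toReal ≤ (μ ({ω | ε ≤ ∑ i, Y i ω} ∪ {ω | ε ≤ -∑ i, Y i ω})).toReal := by
          apply ENNReal.toReal_mono (measure_ne_top _ _) (measure_mono hsub)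
      _ ≤ (μ {ω | ε ≤ ∑ i, Y i ω} + μ {ω | ε ≤ -∑ i, Y i ω}).toReal := by
          apply ENNReal.toReal_mono
          · exact ENNReal.add_ne_top.mpr ⟨measure_ne_top _ _, measure_ne_top _ _⟩
          · exact measure_union_le _ _
      _ = (μ {ω | ε ≤ ∑ i, Y i ω}).toReal + (μ {ω | ε ≤ -∑ i, Y i ω}).toReal :=
          ENNReal.toReal_add (measure_ne_top _ _) (measure_ne_top _ _)
      _ ≤ δ / 2 + δ / 2 := add_le_add hup hdown
      _ = δ := by ring
  -- good event inclusion
  have hinc : Badᶜ ⊆ {ω | |(if 0 ≤ Zhat ω then Zhat ω else κ * |Zhat ω|) - R| ≤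
        max 1 κ * C * Real.sqrt ((1 / 2) * Real.log (2 / δ) * S) +
        (κ + 1) * (2 * (m : ℝ) - 1) * C *
          Real.exp (-2 * ζ ^ 2 / (C ^ 2 * S))} := by
    intro ω hω
    rw [Set.mem_compl_iff, hBad, Set.mem_setOf_eq, not_lt] at hω
    rw [Set.mem_setOf_eq]
    have hR0 : 0 < R := lt_of_lt_of_le hζ hRζ
    have hL1 : (1:ℝ) ≤ max 1 κ := le_max_left _ _
    have hLκ : κ ≤ max 1 κ := le_max_right _ _
    have hphi : |(if 0 ≤ Zhat ω then Zhat ω else κ * |Zhat ω|) - R| ≤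
        max 1 κ * |Zhat ω - R| := by
      split_ifs with hz
      · calc |Zhat ω - R| = 1 * |Zhat ω - R| := (one_mul _).symm
          _ ≤ max 1 κ * |Zhat ω - R| :=
            mul_le_mul_of_nonneg_right hL1 (abs_nonneg _)
      · push_neg at hz
        have habs : |Zhat ω| = -Zhat ω := abs_of_neg hz
        rw [habs]
        have hZR : |Zhat ω - R| = R - Zhat ω := by
          rw [abs_of_neg (by linarith)]; ring
        rw [hZR, abs_le]
        constructor
        · have h1 : R ≤ R - Zhat ω := by linarith
          have h2 : R - Zhat ω ≤ max 1 κ * (R - Zhat ω) :=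
            le_mul_of_one_le_left (by linarith) hL1
          nlinarith [mul_nonneg hκ (neg_nonneg.mpr hz.le)]
        · have h1 : κ * -Zhat ω ≤ κ * (R - Zhat ω) := by nlinarith
          have h2 : κ * (R - Zhat ω) ≤ max 1 κ * (R - Zhat ω) :=
            mul_le_mul_of_nonneg_right hLκ (by linarith)
          linarith
    have hexpterm : 0 ≤ (κ + 1) * (2 * (m : ℝ) - 1) * C *
        Real.exp (-2 * ζ ^ 2 / (C ^ 2 * S)) := by
      have h2m : (0:ℝ) ≤ 2 * (m:ℝ) - 1 := by linarith
      positivity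
    calc |(if 0 ≤ Zhat ω then Zhat ω else κ * |Zhat ω|) - R|
        ≤ max 1 κ * |Zhat ω - R| := hphi
      _ ≤ max 1 κ * ε := mul_le_mul_of_nonneg_left hω (by positivity)
      _ = max 1 κ * C * Real.sqrt ((1 / 2) * Real.log (2 / δ) * S) := by
          rw [hε]; ring
      _ ≤ _ := le_add_of_nonneg_right hexpterm
  -- conclude
  have hgood : (1:ℝ) - δ ≤ (μ Badᶜ).toReal := by
    have hcompl : μ Badᶜ = 1 - μ Bad := prob_compl_eq_one_sub hBadMeas
    rw [hcompl, ENNReal.toReal_sub_of_le prob_le_one ENNReal.one_ne_top]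
    simp only [ENNReal.toReal_one]
    linarith [hBadle]
  calc (1:ℝ) - δ ≤ (μ Badᶜ).toReal := hgood
    _ ≤ _ := ENNReal.toReal_mono (measure_ne_top _ _) (measure_mono hinc)
end
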